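/- Let F be a field of characteristic 2, u, v ∈ F* and w ∈ F. Then in the Witt group W_q(F) one has ⟨1,uv⟩_b ⊗ [1,w] = ⟨1,u⟩_b ⊗ [1,w] + ⟨1,v⟩_b ⊗ [u, w/u]. -/

import Mathlib

/-!  A concrete coefficient-matrix model of (possibly singular) finite-dimensional
quadratic forms over a field, suitable for characteristic 2. -/

/-- Coefficient representation of a (finite-dimensional) quadratic form over a field `F`:
the form of dimension `dim` given by `q(x) = ∑ i j, c i j * x i * x j`. -/
structure QF (F : Type*) [Field F] : Type _ where
  dim : ℕ
  c : Matrix (Fin dim) (Fin dim) F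

namespace QF

variable {F E : Type*} [Field F] [Field E]

/-- Evaluation of the quadratic form at a vector. -/
def eval (q : QF F) (x : Fin q.dim → F) : F :=
  ∑ i, ∑ j, q.c i j * x i * x j

/-- Scalar extension (base change) of a quadratic form along a ring homomorphism. -/
def map (f : F →+* E) (q : QF F) : QF E :=
  ⟨q.dim, fun i j => f (q.c i j)⟩

/-- Orthogonal sum. -/
def orthSum (q q' : QF F) : QF F :=
  ⟨q.dim + q'.dim,
    Matrix.reindex finSumFinEquiv finSumFinEquiv (Matrix.fromBlocks q.c 0 0 q'.c)⟩

/-- Scaling `a • q`. -/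
def smul (a : F) (q : QF F) : QF F := ⟨q.dim, a • q.c⟩

/-- The nonsingular binary quadratic form `[a,b] : (x,y) ↦ ax² + xy + by²`. -/
def bin (a b : F) : QF F := ⟨2, !![a, 1; 0, b]⟩

/-- The diagonal (totally singular) quadratic form `⟨a₁, …, aₙ⟩`. -/
def diag {n : ℕ} (v : Fin n → F) : QF F := ⟨n, Matrix.diagonal v⟩

/-- The zero-dimensional quadratic form. -/
def nil : QF F := { dim := 0, c := 0 }

/-- The one-dimensional form `⟨1⟩`. -/
def unit : QF F := diag (fun _ : Fin 1 => (1 : F))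

/-- Orthogonal sum of a list of forms. -/
def sumList (l : List (QF F)) : QF F := l.foldr orthSum nil

/-- `pfTensor [a₁,…,aₙ] q` is the tensor product `⟨⟨a₁,…,aₙ⟩⟩_b ⊗ q` of the bilinear
Pfister form `⟨⟨a₁,…,aₙ⟩⟩_b = ⟨1,a₁⟩_b ⊗ ⋯ ⊗ ⟨1,aₙ⟩_b` with the quadratic form `q`,
via `⟨1,a⟩_b ⊗ q ≅ q ⊥ a·q`. -/
def pfTensor (l : List F) (q : QF F) : QF F :=
  l.foldr (fun a r => orthSum r (smul a r)) q

/-- The hyperbolic plane `ℍ ≅ [0,0]`. -/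
def hypPlane : QF F := bin 0 0

/-- The orthogonal sum of `k` hyperbolic planes. -/
def hyp (k : ℕ) : QF F := sumList (List.replicate k hypPlane)

/-- The `l`-dimensional zero form `⟨0,…,0⟩`. -/
def zeros (l : ℕ) : QF F := diag (fun _ : Fin l => (0 : F))

/-- Isometry of quadratic forms. -/
def Isometric (q q' : QF F) : Prop :=
  ∃ e : (Fin q.dim → F) ≃ₗ[F] (Fin q'.dim → F), ∀ x, q'.eval (e x) = q.eval x

/-- Anisotropy: the form has no nontrivial zero. -/
def Anisotropic (q : QF F) : Prop := ∀ x, q.eval x = 0 → x = 0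

/-- A quadratic form is nonsingular if the radical of its polar form
`B_q(x,y) = q(x+y) - q(x) - q(y)` (with matrix `c + cᵀ`) is trivial. -/
def Nonsingular (q : QF F) : Prop := ∀ x, (q.c + q.c.transpose).mulVec x = 0 → x = 0

/-- A quadratic form is totally singular if its polar form vanishes identically. -/
def TotallySingular (q : QF F) : Prop := q.c + q.c.transpose = 0

/-- A quadratic form is hyperbolic if it is isometric to an orthogonal sum of
hyperbolic planes. -/
def Hyperbolic (q : QF F) : Prop := ∃ k, Isometric q (hyp k)

/-- Witt equivalence: `q ~ q'` iff the anisotropic parts agree, equivalently the two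
forms become isometric after adding suitable numbers of hyperbolic planes and zero
forms. -/
def WittEquiv (q q' : QF F) : Prop :=
  ∃ k k' l l', Isometric (orthSum q (orthSum (hyp k) (zeros l)))
    (orthSum q' (orthSum (hyp k') (zeros l')))

/-- `AnisoPartOf φ q` : `φ` is (isometric to) the anisotropic part of `q`, i.e. `φ` is
anisotropic and `q ≅ k × ℍ ⊥ φ ⊥ ⟨0,…,0⟩`. -/
def AnisoPartOf (φ q : QF F) : Prop :=
  Anisotropic φ ∧ ∃ k l, Isometric q (orthSum (hyp k) (orthSum φ (zeros l)))

/-- `Dominates q' q` means `q ≺ q'`, i.e. `q'` dominates `q`: there is an injective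
linear map `t` of the underlying spaces with `q' ∘ t = q`. -/
def Dominates (q' q : QF F) : Prop :=
  ∃ t : (Fin q.dim → F) →ₗ[F] (Fin q'.dim → F), Function.Injective t ∧
    ∀ x, q'.eval (t x) = q.eval x

/-- The affine quadric polynomial `∑ cᵢⱼ XᵢXⱼ` of a quadratic form. -/
noncomputable def toPoly (q : QF F) : MvPolynomial (Fin q.dim) F :=
  ∑ i, ∑ j, MvPolynomial.C (q.c i j) * (MvPolynomial.X i * MvPolynomial.X j)

/-- The affine coordinate ring of the (reduced) quadric `q = 0`. -/
abbrev CoordRing (q : QF F) : Type _ :=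
  MvPolynomial (Fin q.dim) F ⧸ (Ideal.span {q.toPoly}).radical

/-- The function field of the quadric `q = 0` (assuming the quadric is integral). -/
abbrev FunctionField (q : QF F) [IsDomain (CoordRing q)] : Type _ :=
  FractionRing (CoordRing q)

/-- The canonical ring homomorphism from a base field `F` into the function field of a
quadric defined over an extension field `K` of `F`. -/
noncomputable def toFunctionField {K : Type*} [Field K] [Algebra F K] (q : QF K)
    [IsDomain (CoordRing q)] : F →+* FunctionField q :=
  (algebraMap (CoordRing q) (FunctionField q)).comp
    ((algebraMap K (CoordRing q)).comp (algebraMap F K))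

end QF

/-! Substituting `y ↦ y / u` shows `u·[1,w] ≅ [u, w/u]`, hence `v·[u, w/u] ≅ uv·[1,w]`.
After regrouping, the right-hand side is therefore isometric to
`[1,w] ⊥ uv·[1,w] ⊥ ([u,w/u] ⊥ [u,w/u])`, and in characteristic 2 the orthogonal sum of a
binary form `[a,b]` with itself is `ℍ ⊥ ℍ`. -/

namespace QF

variable {F : Type*} [Field F]

def toQuadraticForm (q : QF F) : QuadraticForm F (Fin q.dim → F) := q.c.toQuadraticForm'

theorem toQuadraticForm_apply (q : QF F) (x : Fin q.dim → F) :
    q.toQuadraticForm x = q.eval x := by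
  simp only [toQuadraticForm, Matrix.toQuadraticForm', LinearMap.BilinMap.toQuadraticMap_apply,
    Matrix.toLinearMap₂'_apply, eval, smul_eq_mul]
  exact Finset.sum_congr rfl fun _ _ => Finset.sum_congr rfl fun _ _ => by ring

theorem isometric_iff_equivalent {q q' : QF F} :
    Isometric q q' ↔ q.toQuadraticForm.Equivalent q'.toQuadraticForm := by
  simp only [Isometric, QuadraticMap.Equivalent, ← toQuadraticForm_apply]
  exact ⟨fun ⟨e, he⟩ => ⟨⟨e, he⟩⟩, fun ⟨e⟩ => ⟨e.toLinearEquiv, e.map_app⟩⟩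

theorem eval_orthSum (q q' : QF F) (x : Fin (q.orthSum q').dim → F) :
    (q.orthSum q').eval x =
      q.eval (fun i => x (Fin.castAdd q'.dim i)) + q'.eval (fun i => x (Fin.natAdd q.dim i)) := by
  unfold eval orthSum
  rw [← finSumFinEquiv.sum_comp]
  simp [← finSumFinEquiv.sum_comp (ι := Fin q.dim ⊕ Fin q'.dim), Matrix.reindex_apply]

theorem equivalent_orthSum_prod (q q' : QF F) :
    (q.orthSum q').toQuadraticForm.Equivalent (q.toQuadraticForm.prod q'.toQuadraticForm) :=
  ⟨{ (LinearEquiv.funCongrLeft F F finSumFinEquiv).trans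
        (LinearEquiv.sumArrowLequivProdArrow _ _ F F) with
      map_app' := fun x => by
        simp only [QuadraticMap.prod_apply, toQuadraticForm_apply, eval_orthSum]
        rfl }⟩

theorem Isometric.refl (q : QF F) : Isometric q q := ⟨LinearEquiv.refl F _, fun _ => rfl⟩

theorem Isometric.symm {q q' : QF F} (h : Isometric q q') : Isometric q' q :=
  isometric_iff_equivalent.2 (isometric_iff_equivalent.1 h).symm

theorem Isometric.trans {q q' q'' : QF F} (h : Isometric q q') (h' : Isometric q' q'') :
    Isometric q q'' :=
  isometric_iff_equivalent.2 <|
    (isometric_iff_equivalent.1 h).trans (isometric_iff_equivalent.1 h')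

instance : Trans (Isometric (F := F)) Isometric Isometric := ⟨Isometric.trans⟩

theorem isometric_of_equivalent_prod {q₁ q₂ r₁ r₂ : QF F}
    (h : (q₁.toQuadraticForm.prod q₂.toQuadraticForm).Equivalent
      (r₁.toQuadraticForm.prod r₂.toQuadraticForm)) :
    Isometric (q₁.orthSum q₂) (r₁.orthSum r₂) :=
  isometric_iff_equivalent.2 <|
    (equivalent_orthSum_prod q₁ q₂).trans (h.trans (equivalent_orthSum_prod r₁ r₂).symm)

theorem Isometric.orthSum {q₁ q₂ r₁ r₂ : QF F} (hq : Isometric q₁ r₁)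
    (hr : Isometric q₂ r₂) :
    Isometric (q₁.orthSum q₂) (r₁.orthSum r₂) :=
  isometric_of_equivalent_prod <|
    (isometric_iff_equivalent.1 hq).prod (isometric_iff_equivalent.1 hr)

theorem isometric_orthSum_comm (q q' : QF F) : Isometric (q.orthSum q') (q'.orthSum q) :=
  isometric_of_equivalent_prod ⟨.prodComm _ _⟩

theorem isometric_orthSum_orthSum_orthSum_comm (q₁ q₂ q₃ q₄ : QF F) :
    Isometric ((q₁.orthSum q₂).orthSum (q₃.orthSum q₄))
      ((q₁.orthSum q₃).orthSum (q₂.orthSum q₄)) :=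
  isometric_of_equivalent_prod <|
    (((equivalent_orthSum_prod q₁ q₂).prod (equivalent_orthSum_prod q₃ q₄)).trans
      ⟨.prodProdProdComm _ _ _ _⟩).trans
    ((equivalent_orthSum_prod q₁ q₃).prod (equivalent_orthSum_prod q₂ q₄)).symm

theorem isometric_orthSum_of_dim_eq_zero (q : QF F) {r : QF F} (hr : r.dim = 0) :
    Isometric (q.orthSum r) q := by
  have : IsEmpty (Fin r.dim) := by rw [hr]; infer_instance
  refine isometric_iff_equivalent.2 ((equivalent_orthSum_prod q r).trans
    ⟨{ LinearEquiv.prodUnique with map_app' := fun x => ?_ }⟩)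
  simp [Subsingleton.elim x.2 0]

theorem eval_smul (a : F) (q : QF F) (x : Fin q.dim → F) : (smul a q).eval x = a * q.eval x := by
  simp only [eval, smul, Matrix.smul_apply, smul_eq_mul, mul_assoc, Finset.mul_sum]
  rfl

theorem Isometric.smul {q q' : QF F} (h : Isometric q q') (a : F) :
    Isometric (smul a q) (smul a q') := by
  obtain ⟨e, he⟩ := h
  exact ⟨e, fun x => (eval_smul a q' (e x)).trans (by rw [he x]; exact (eval_smul a q x).symm)⟩

theorem smul_smul (a b : F) (q : QF F) : smul a (smul b q) = smul (a * b) q :=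
  congrArg (QF.mk q.dim) (_root_.smul_smul a b q.c)

theorem eval_bin (a b : F) (x : Fin 2 → F) :
    (bin a b).eval x = a * x 0 ^ 2 + x 0 * x 1 + b * x 1 ^ 2 := by
  show ∑ i : Fin 2, ∑ j : Fin 2, !![a, 1; 0, b] i j * x i * x j = _
  simp only [Fin.sum_univ_two, Matrix.of_apply, Matrix.cons_val', Matrix.cons_val_zero,
    Matrix.cons_val_one, Matrix.cons_val_fin_one]
  ring

theorem isometric_smul_bin {a : F} (ha : a ≠ 0) (b c : F) :
    Isometric (smul a (bin b c)) (bin (a * b) (c / a)) := by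
  refine ⟨LinearEquiv.piCongrRight fun i : Fin 2 =>
      LinearEquiv.smulOfNeZero F F (![1, a] i) (by fin_cases i <;> simp [ha]),
    fun x : Fin 2 → F => ?_⟩
  refine (eval_bin (a * b) (c / a) fun i => ![1, a] i * x i).trans ?_
  refine Eq.trans ?_ ((eval_smul a (bin b c) x).trans (congrArg (a * ·) (eval_bin b c x))).symm
  simp only [Matrix.cons_val_zero, Matrix.cons_val_one, Matrix.cons_val_fin_one, one_mul]
  field_simp

theorem eval_bin_orthSum_bin (a b c d : F) (x : Fin 4 → F) :
    ((bin a b).orthSum (bin c d)).eval x =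
      a * x 0 ^ 2 + x 0 * x 1 + b * x 1 ^ 2 + (c * x 2 ^ 2 + x 2 * x 3 + d * x 3 ^ 2) := by
  erw [eval_orthSum, eval_bin, eval_bin]
  rfl

theorem eval_hyp_two (x : Fin 4 → F) : (hyp 2 : QF F).eval x = x 0 * x 1 + x 2 * x 3 := by
  simp only [hyp, hypPlane, sumList, List.replicate, List.foldr]
  erw [eval_orthSum, eval_orthSum, eval_bin, eval_bin]
  simp only [eval, nil, Matrix.zero_apply, zero_mul, zero_add, Finset.sum_const_zero, add_zero]
  rfl

/- With `s = x₀ + x₂` and `t = x₁ + x₃`, in characteristic 2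
`[a,b](x₀,x₁) + [a,b](x₂,x₃) = s (a s + x₃) + t (x₀ + b t)`. -/
def binOrthSumSelfEquiv (a b : F) : (Fin 4 → F) ≃ₗ[F] (Fin 4 → F) where
  toFun x := ![x 0 + x 2, a * (x 0 + x 2) + x 3, x 1 + x 3, x 0 + b * (x 1 + x 3)]
  invFun p := ![p 3 - b * p 2, p 2 - p 1 + a * p 0, p 0 - p 3 + b * p 2, p 1 - a * p 0]
  map_add' x y := by ext i; fin_cases i <;> simp <;> ring
  map_smul' c x := by ext i; fin_cases i <;> simp <;> ring
  left_inv x := by ext i; fin_cases i <;> simp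
  right_inv p := by ext i; fin_cases i <;> simp

theorem isometric_bin_orthSum_self_hyp [CharP F 2] (a b : F) :
    Isometric ((bin a b).orthSum (bin a b)) (hyp 2) := by
  refine ⟨binOrthSumSelfEquiv a b, fun x : Fin 4 → F => ?_⟩
  refine (eval_hyp_two
    ![x 0 + x 2, a * (x 0 + x 2) + x 3, x 1 + x 3, x 0 + b * (x 1 + x 3)]).trans ?_
  refine Eq.trans ?_ (eval_bin_orthSum_bin a b a b x).symm
  simp only [Matrix.cons_val]
  linear_combination (a * x 0 * x 2 + x 0 * x 3 + b * x 1 * x 3) * CharTwo.two_eq_zero (R := F)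

theorem wittEquiv_of_isometric_orthSum_hyp {q q' : QF F} {k : ℕ}
    (h : Isometric (q.orthSum (hyp k)) q') : WittEquiv q q' :=
  ⟨k, 0, 0, 0, ((Isometric.refl q).orthSum (isometric_orthSum_of_dim_eq_zero _ rfl)).trans
    (h.trans (isometric_orthSum_of_dim_eq_zero _ rfl).symm)⟩

end QF

open QF in
theorem product_relation_general
    (F : Type*) [Field F] [CharP F 2] (u v : F) (hu : u ≠ 0) (w : F) :
    WittEquiv ((bin 1 w).orthSum (smul (u * v) (bin 1 w)))
      (((bin 1 w).orthSum (smul u (bin 1 w))).orthSum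
        ((bin u (w / u)).orthSum (smul v (bin u (w / u))))) := by
  set B := bin 1 w
  set P := bin u (w / u)
  have hP : Isometric (smul u B) P := by
    simpa only [mul_one] using isometric_smul_bin hu 1 w
  have hvP : Isometric (smul v P) (smul (u * v) B) := by
    simpa only [QF.smul_smul, mul_comm] using hP.symm.smul v
  refine wittEquiv_of_isometric_orthSum_hyp (k := 2) (Isometric.symm ?_)
  calc Isometric ((B.orthSum (smul u B)).orthSum (P.orthSum (smul v P)))
        ((B.orthSum (smul u B)).orthSum ((smul v P).orthSum P)) :=
        (Isometric.refl _).orthSum (isometric_orthSum_comm _ _)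
    Isometric _ ((B.orthSum (smul v P)).orthSum ((smul u B).orthSum P)) :=
        isometric_orthSum_orthSum_orthSum_comm _ _ _ _
    Isometric _ ((B.orthSum (smul (u * v) B)).orthSum (P.orthSum P)) :=
        ((Isometric.refl B).orthSum hvP).orthSum (hP.orthSum (Isometric.refl P))
    Isometric _ ((B.orthSum (smul (u * v) B)).orthSum (hyp 2)) :=
        (Isometric.refl _).orthSum (isometric_bin_orthSum_self_hyp _ _)

open QF in
/-- Over a field `F` of characteristic 2, for `u, v ∈ F*` and `w ∈ F`,
in `W_q(F)` one has `⟨1,uv⟩_b ⊗ [1,w] = ⟨1,u⟩_b ⊗ [1,w] + ⟨1,v⟩_b ⊗ [u, w/u]`. -/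
theorem product_relation
    (F : Type*) [Field F] [CharP F 2] (u v : F) (hu : u ≠ 0) (hv : v ≠ 0) (w : F) :
    WittEquiv ((bin 1 w).orthSum (smul (u * v) (bin 1 w)))
      (((bin 1 w).orthSum (smul u (bin 1 w))).orthSum
        ((bin u (w / u)).orthSum (smul v (bin u (w / u))))) :=
  product_relation_general F u v hu w
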